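/- arXiv:1810.11404 — 5 statements merged into one kernel-verified Lean document; each statement's English description precedes it below -/
import Mathlib

section
/- Let E be a system of m monotone fixpoint equations over a complete lattice L, with i-th equation xᵢ =_{ηᵢ} fᵢ(x₁,…,x_m) where ηᵢ ∈ {μ,ν}, and let sol(E) be defined recursively by solving the last equation parametrically. Then for every index i, the function g : L → L^{m-1} given by g(x) = sol(E[xᵢ := x]) (the solution of the (m−1)-equation system obtained by deleting the i-th equation and substituting x for xᵢ) is monotone. -/
/-- The solution of a system of `m` fixpoint equations `xᵢ =_{ηᵢ} fᵢ(x₁,…,x_m)` over a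
complete lattice, defined recursively: the last equation is solved parametrically; the
flag `η i = true` means a greatest-fixpoint (ν) equation and `η i = false` a
least-fixpoint (μ) equation, with `μ g = ⨅ {l | g l ≤ l}` and `ν g = ⨆ {l | l ≤ g l}`. -/
def solSystem {L : Type*} [CompleteLattice L] :
    (m : ℕ) → (Fin m → Bool) → (Fin m → (Fin m → L) → L) → Fin m → L
  | 0, _, _ => Fin.elim0
  | m + 1, η, f =>
      let sub : L → Fin m → L := fun x =>
        solSystem m (fun j => η j.castSucc) (fun j v => f j.castSucc (Fin.snoc v x))
      let g : L → L := fun x => f (Fin.last m) (Fin.snoc (sub x) x)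
      let u : L :=
        if η (Fin.last m) = true then sSup {l : L | l ≤ g l} else sInf {l : L | g l ≤ l}
      Fin.snoc (sub u) u

/-!
By induction on the number of equations, the solution is monotone in the system itself:
if every right-hand side of one system lies below the corresponding one of another on
comparable arguments, then so do the solutions. The step holds because both `μ g` and
`ν g` grow with `g`, and the parametric solutions of the first `m` equations grow with the
parameter by induction. Substituting a larger value for `xᵢ` in monotone right-hand sides
yields such a pointwise larger system.
-/

lemma Fin.snoc_le_snoc {α : Type*} [Preorder α] {m : ℕ} {v w : Fin m → α} {x y : α}
    (hv : v ≤ w) (hx : x ≤ y) : (Fin.snoc v x : Fin (m + 1) → α) ≤ Fin.snoc w y :=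
  (Fin.snocOrderIso fun _ => α).monotone (Prod.mk_le_mk.2 ⟨hx, hv⟩)

section

variable {L : Type*} [CompleteLattice L]

def extremalFixpoint (η : Bool) (g : L → L) : L :=
  if η = true then sSup {l : L | l ≤ g l} else sInf {l : L | g l ≤ l}

lemma extremalFixpoint_mono (η : Bool) {g g' : L → L} (h : g ≤ g') :
    extremalFixpoint η g ≤ extremalFixpoint η g' := by
  unfold extremalFixpoint
  split
  · exact sSup_le_sSup fun l hl => hl.trans (h l)
  · exact sInf_le_sInf fun l hl => (h l).trans hl

lemma solSystem_le_solSystem :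
    ∀ (m : ℕ) (η : Fin m → Bool) (f g : Fin m → (Fin m → L) → L),
      (∀ i v w, v ≤ w → f i v ≤ g i w) → solSystem m η f ≤ solSystem m η g
  | 0, _, _, _, _ => fun j => j.elim0
  | m + 1, η, f, g, hfg => by
    have hsub : ∀ x y : L, x ≤ y →
        solSystem m (fun j => η j.castSucc) (fun j v => f j.castSucc (Fin.snoc v x)) ≤
          solSystem m (fun j => η j.castSucc) (fun j v => g j.castSucc (Fin.snoc v y)) :=
      fun x y hxy => solSystem_le_solSystem m _ _ _
        fun j v w hvw => hfg _ _ _ (Fin.snoc_le_snoc hvw hxy)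
    -- definitionally, `solSystem (m + 1) η f = Fin.snoc (sub u) u` with `u` an `extremalFixpoint`
    refine (fun hfix => Fin.snoc_le_snoc (hsub _ _ hfix) hfix) ?_
    exact extremalFixpoint_mono _ fun x => hfg _ _ _ (Fin.snoc_le_snoc (hsub x x le_rfl) le_rfl)

end

/-- For a system `E` of `m+1` monotone fixpoint equations over a complete lattice `L`
and any index `i`, the function `g : L → L^m` mapping `x` to the solution of the
system `E[xᵢ := x]` (obtained by deleting the `i`-th equation and substituting `x`
for `xᵢ`) is monotone. -/
theorem solSystem_subst_monotone {L : Type*} [CompleteLattice L] (m : ℕ)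
    (η : Fin (m + 1) → Bool) (f : Fin (m + 1) → (Fin (m + 1) → L) → L)
    (hf : ∀ i, Monotone (f i)) (i : Fin (m + 1)) :
    Monotone (fun x : L =>
      solSystem m (fun j => η (i.succAbove j))
        (fun j v => f (i.succAbove j) (Fin.insertNth i x v))) :=
  fun _ _ hxy => solSystem_le_solSystem m _ _ _ fun _ _ _ hvw =>
    hf _ ((Fin.insertNthOrderIso (fun _ => L) i).monotone (Prod.mk_le_mk.2 ⟨hxy, hvw⟩))
end

section
/- Correctness of the single-equation fixpoint game for ν: Let L be a continuous lattice with basis B_L (with ⊥ ∉ B_L), f : L → L monotone, and b ∈ B_L with b ⋢ f^β(⊤) for some ordinal β. Then in the game where from b player ∃ chooses l with b ⊑ f(l) and from l player ∀ chooses b' ∈ B_L with b' ≪ l (∀ winning infinite plays being impossible here; rather ∀ wins by forcing a failure of ∃), player ∀ has a winning strategy; in particular, for any l with b ⊑ f(l) there exists b' ∈ B_L with b' ≪ l and b' ⋢ f^γ(⊤) for some γ < β (or γ with γ+1 ≤ β). -/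
/-!
The least ordinal `α` with `b ⋢ f^α(⊤)` is neither `0` (as `f^0(⊤) = ⊤`) nor a limit (as `b` lies
below all earlier iterates, hence below their infimum), so it is a successor `γ + 1`. If `b ⊑ f(l)`
then `l ⋢ f^γ(⊤)`, since otherwise `b ⊑ f(f^γ(⊤)) = f^(γ+1)(⊤)` by monotonicity; continuity of `L`
then provides a basis element way below `l` that is not below `f^γ(⊤)`.
-/

def wayBelow {L : Type*} [CompleteLattice L] (a b : L) : Prop :=
  ∀ D : Set L, D.Nonempty → DirectedOn (· ≤ ·) D → b ≤ sSup D → ∃ d ∈ D, a ≤ d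

/-- The transfinite iterates `f^α(⊤)`: `f^0(⊤) = ⊤`, `f^(α+1)(⊤) = f (f^α(⊤))`, and
`f^α(⊤) = ⨅_{β<α} f^β(⊤)` at limit ordinals. -/
noncomputable def topIter {L : Type*} [CompleteLattice L] (f : L → L) (o : Ordinal) : L :=
  Ordinal.limitRecOn o ⊤ (fun _ ih => f ih)
    (fun o _ ih => ⨅ p : Set.Iio o, ih p.1 p.2)

section Iterates

variable {L : Type*} [CompleteLattice L]

lemma topIter_zero (f : L → L) : topIter f 0 = ⊤ := by
  simp [topIter]

lemma topIter_succ (f : L → L) (o : Ordinal) :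
    topIter f (Order.succ o) = f (topIter f o) := by
  simp [topIter]

lemma topIter_limit (f : L → L) {o : Ordinal} (ho : Order.IsSuccLimit o) :
    topIter f o = ⨅ p : Set.Iio o, topIter f p.1 := by
  simp [topIter, Ordinal.limitRecOn_limit _ _ _ _ ho]

lemma exists_lt_not_le_topIter_succ {f : L → L} {b : L} {β : Ordinal}
    (hβ : ¬ b ≤ topIter f β) : ∃ γ < β, ¬ b ≤ topIter f (Order.succ γ) := by
  obtain ⟨β₀, hβ₀, hmin⟩ := wellFounded_lt.has_min {α | ¬ b ≤ topIter f α} ⟨β, hβ⟩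
  have hbelow : ∀ γ < β₀, b ≤ topIter f γ := fun γ hγ => not_not.mp fun h => hmin γ h hγ
  rcases Ordinal.zero_or_succ_or_isSuccLimit β₀ with rfl | ⟨γ, rfl⟩ | hlim
  · exact absurd (topIter_zero f ▸ le_top) hβ₀
  · exact ⟨γ, (Order.lt_succ γ).trans_le (not_lt.mp (hmin β hβ)), hβ₀⟩
  · exact absurd (topIter_limit f hlim ▸ le_iInf fun p => hbelow p.1 p.2) hβ₀

end Iterates

section WayBelow

variable {L : Type*} [CompleteLattice L]

lemma wayBelow_of_le_of_wayBelow {a b c : L} (hab : a ≤ b) (hbc : wayBelow b c) :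
    wayBelow a c :=
  fun D hD hdir hle => (hbc D hD hdir hle).imp fun _ ⟨hd, hbd⟩ => ⟨hd, hab.trans hbd⟩

lemma exists_basis_wayBelow_not_le (B : Set L)
    (hcont : ∀ l : L, l = sSup {l' : L | wayBelow l' l})
    (hbasis : ∀ l : L, l = sSup {b | b ∈ B ∧ b ≤ l})
    {l m : L} (h : ¬ l ≤ m) :
    ∃ b ∈ B, wayBelow b l ∧ ¬ b ≤ m := by
  by_contra! hB
  refine h ((hcont l).trans_le (sSup_le fun l' hl' => ?_))
  exact (hbasis l').trans_le
    (sSup_le fun b ⟨hbB, hbl'⟩ => hB b hbB (wayBelow_of_le_of_wayBelow hbl' hl'))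

end WayBelow

theorem nu_game_correctness_step_general {L : Type*} [CompleteLattice L] (B : Set L)
    (hcont : ∀ l : L, l = sSup {l' : L | wayBelow l' l})
    (hbasis : ∀ l : L, l = sSup {b | b ∈ B ∧ b ≤ l})
    (f : L → L) (hf : Monotone f)
    (b : L) (β : Ordinal) (hβ : ¬ b ≤ topIter f β) :
    ∀ l : L, b ≤ f l →
      ∃ b' ∈ B, wayBelow b' l ∧ ∃ γ : Ordinal, γ < β ∧ ¬ b' ≤ topIter f γ := by
  intro l hbl
  obtain ⟨γ, hγβ, hγ⟩ := exists_lt_not_le_topIter_succ hβ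
  have hl : ¬ l ≤ topIter f γ := fun hle =>
    hγ ((topIter_succ f γ).symm ▸ hbl.trans (hf hle))
  obtain ⟨b', hb'B, hwb, hb'⟩ := exists_basis_wayBelow_not_le B hcont hbasis hl
  exact ⟨b', hb'B, hwb, γ, hγβ, hb'⟩

/-- Correctness of the single-equation fixpoint game for ν: if `L` is a continuous
lattice with basis `B` (with `⊥ ∉ B`), `f : L → L` is monotone and `b ∈ B` satisfies
`b ⋢ f^β(⊤)` for some ordinal `β`, then for any move `l` of the existential player
(i.e. any `l` with `b ⊑ f(l)`), the universal player has an answer: there exist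
`b' ∈ B` with `b' ≪ l` and an ordinal `γ < β` (equivalently `γ + 1 ≤ β`) such that
`b' ⋢ f^γ(⊤)`. -/
theorem nu_game_correctness_step {L : Type*} [CompleteLattice L] (B : Set L)
    (hcont : ∀ l : L, l = sSup {l' : L | wayBelow l' l})
    (hbasis : ∀ l : L, l = sSup {b | b ∈ B ∧ b ≤ l})
    (hbot : (⊥ : L) ∉ B)
    (f : L → L) (hf : Monotone f)
    (b : L) (hb : b ∈ B) (β : Ordinal) (hβ : ¬ b ≤ topIter f β) :
    ∀ l : L, b ≤ f l →
      ∃ b' ∈ B, wayBelow b' l ∧ ∃ γ : Ordinal, γ < β ∧ ¬ b' ≤ topIter f γ :=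
  nu_game_correctness_step_general B hcont hbasis f hf b β hβ
end

section
/- Let L be a non-continuous complete lattice and B_L a basis with ⊥ ∉ B_L. Then there exists a monotone function f : L → L and a basis element b ∈ B_L such that b ⋢ μf, yet b ⊑ f(l) for l = ⨆{l' | l' ≪ l₀} where l₀ witnesses non-continuity, and every b' ∈ B_L with b' ≪ l satisfies b' ⊑ μf. Concretely: take l₀ with ⨆↡l₀ ⊏ l₀, define f(x) = ⨆↡l₀ if x ⊑ ⨆↡l₀ and f(x) = ⊤ otherwise; then f is monotone, μf = ⨆↡l₀, and there is b ∈ B_L with b ⊑ l₀ and b ⋢ μf. -/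
open scoped Classical

section

variable {L : Type*} [CompleteLattice L]

theorem wayBelow.le {a b : L} (h : wayBelow a b) : a ≤ b := by
  obtain ⟨d, rfl, had⟩ := h {b} (Set.singleton_nonempty b) (directedOn_singleton b)
    (sSup_singleton.ge)
  exact had

theorem sSup_wayBelow_le (l : L) : sSup {a | wayBelow a l} ≤ l :=
  sSup_le fun _ ha => ha.le

theorem monotone_ite_le_top (s : L) : Monotone fun x : L => if x ≤ s then s else ⊤ := by
  intro x y hxy
  by_cases hy : y ≤ s
  · simp only [hxy.trans hy, hy, if_true, le_refl]
  · by_cases hx : x ≤ s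
    · simp only [hx, hy, if_true, if_false, le_top]
    · simp only [hx, hy, if_false, le_refl]

theorem sInf_prefixedPoints_ite_le_top (s : L) :
    sInf {l : L | (if l ≤ s then s else ⊤) ≤ l} = s := by
  refine le_antisymm (sInf_le (by simp)) (le_sInf fun l hl => ?_)
  by_cases hls : l ≤ s
  · simpa only [Set.mem_ofPred_eq, hls, if_true] using hl
  · simp only [Set.mem_ofPred_eq, hls, if_false, top_le_iff] at hl
    exact hl ▸ le_top

theorem exists_mem_le_not_le_of_eq_sSup {B : Set L} {l s : L}
    (hl : l = sSup {b | b ∈ B ∧ b ≤ l}) (hls : ¬ l ≤ s) : ∃ b ∈ B, b ≤ l ∧ ¬ b ≤ s := by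
  by_contra! hB
  exact hls (hl ▸ sSup_le fun b ⟨hbB, hbl⟩ => hB b hbB hbl)

end

theorem noncontinuous_counterexample_general {L : Type*} [CompleteLattice L] (B : Set L)
    (hbasis : ∀ l : L, l = sSup {b | b ∈ B ∧ b ≤ l})
    (l₀ : L) (h : sSup {l' : L | wayBelow l' l₀} ≠ l₀) :
    Monotone (fun x : L =>
        if x ≤ sSup {l' : L | wayBelow l' l₀} then sSup {l' : L | wayBelow l' l₀}
        else ⊤) ∧
    sInf {l : L |
        (if l ≤ sSup {l' : L | wayBelow l' l₀} then sSup {l' : L | wayBelow l' l₀}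
         else ⊤) ≤ l} = sSup {l' : L | wayBelow l' l₀} ∧
    ∃ b ∈ B, b ≤ l₀ ∧ ¬ b ≤ sSup {l' : L | wayBelow l' l₀} := by
  have hl₀ : ¬ l₀ ≤ sSup {l' : L | wayBelow l' l₀} := fun hle =>
    h (le_antisymm (sSup_wayBelow_le l₀) hle)
  exact ⟨monotone_ite_le_top _, sInf_prefixedPoints_ite_le_top _,
    exists_mem_le_not_le_of_eq_sSup (hbasis l₀) hl₀⟩

/-- Correctness of the fixpoint game fails on non-continuous lattices: if `L` is a
complete lattice with basis `B` (`⊥ ∉ B`) and `l₀` witnesses non-continuity, i.e.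
`s := ⨆ {l' | l' ≪ l₀} ≠ l₀`, then the function `f(x) = s` if `x ⊑ s` and `f(x) = ⊤`
otherwise is monotone, its least fixpoint `μf = ⨅ {l | f l ≤ l}` equals `s`, and
there exists a basis element `b ∈ B` with `b ⊑ l₀` and `b ⋢ μf`. -/
theorem noncontinuous_counterexample {L : Type*} [CompleteLattice L] (B : Set L)
    (hbasis : ∀ l : L, l = sSup {b | b ∈ B ∧ b ≤ l})
    (hbot : (⊥ : L) ∉ B)
    (l₀ : L) (h : sSup {l' : L | wayBelow l' l₀} ≠ l₀) :
    Monotone (fun x : L =>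
        if x ≤ sSup {l' : L | wayBelow l' l₀} then sSup {l' : L | wayBelow l' l₀}
        else ⊤) ∧
    sInf {l : L |
        (if l ≤ sSup {l' : L | wayBelow l' l₀} then sSup {l' : L | wayBelow l' l₀}
         else ⊤) ≤ l} = sSup {l' : L | wayBelow l' l₀} ∧
    ∃ b ∈ B, b ≤ l₀ ∧ ¬ b ≤ sSup {l' : L | wayBelow l' l₀} :=
  noncontinuous_counterexample_general B hbasis l₀ h
end

section
/- Let L be a complete lattice with basis B_L, and suppose b ∈ B_L is not compact (b ⋪ b). Then there is a monotone function f : L → L whose least fixpoint is ⊤ (so b ⊑ μf) constructed from a transfinite chain (d_α) witnessing non-compactness, namely f(x) = ⊤ if b ⊑ x and f(x) = d_α with α = min{β | d_β ⋢ x} otherwise; this f is well-defined, monotone, and ⊤ is its only fixpoint. -/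
/-!
Since `b ≤ ⨆ α, d α`, an element `x` with `b ≰ x` cannot lie above every `d β`, so the first
`β` with `d β ≰ x` exists, and then `f x = d β` is not below `x`. Hence `x` is a pre-fixpoint
of `f` only if `b ≤ x`, where `f x = ⊤`, i.e. only if `x = ⊤`. Monotonicity holds because
enlarging `x` can only postpone the first index escaping it, and `d` is monotone.
-/

open scoped Classical

namespace ChainStep

variable {L ι : Type*} [CompleteLattice L] {b : L} {d : ι → L}

theorem nonempty_not_le (hsup : b ≤ sSup (Set.range d)) {x : L} (hx : ¬ b ≤ x) :
    {β | ¬ d β ≤ x}.Nonempty := by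
  by_contra h
  refine hx (hsup.trans (sSup_le ?_))
  rintro _ ⟨β, rfl⟩
  by_contra hβ
  exact h ⟨β, hβ⟩

variable [ConditionallyCompleteLinearOrderBot ι]

-- The map `f` of the paper.
noncomputable def chainStep (b : L) (d : ι → L) (x : L) : L :=
  if b ≤ x then ⊤ else d (sInf {β | ¬ d β ≤ x})

theorem chainStep_monotone (hd : Monotone d) (hsup : b ≤ sSup (Set.range d)) :
    Monotone (chainStep b d) := by
  intro x y hxy
  by_cases hy : b ≤ y
  · simp only [chainStep, hy, if_true, le_top]
  have hx : ¬ b ≤ x := fun h => hy (h.trans hxy)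
  simp only [chainStep, hx, hy, if_false]
  refine hd (csInf_le_csInf (OrderBot.bddBelow _) (nonempty_not_le hsup hy) ?_)
  exact fun β hβ h => hβ (h.trans hxy)

variable [WellFoundedLT ι]

theorem not_chainStep_le_of_not_le (hsup : b ≤ sSup (Set.range d)) {x : L} (hx : ¬ b ≤ x) :
    ¬ chainStep b d x ≤ x := by
  rw [chainStep, if_neg hx]
  exact csInf_mem (nonempty_not_le hsup hx)

theorem chainStep_le_iff (hsup : b ≤ sSup (Set.range d)) {x : L} :
    chainStep b d x ≤ x ↔ x = ⊤ := by
  by_cases hx : b ≤ x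
  · simp only [chainStep, hx, if_true, top_le_iff]
  · refine iff_of_false (not_chainStep_le_of_not_le hsup hx) ?_
    rintro rfl
    exact hx le_top

theorem chainStep_eq_self_iff (hsup : b ≤ sSup (Set.range d)) {x : L} :
    chainStep b d x = x ↔ x = ⊤ := by
  refine ⟨fun h => (chainStep_le_iff hsup).1 h.le, ?_⟩
  rintro rfl
  simp only [chainStep, le_top, if_true]

theorem sInf_setOf_chainStep_le (hsup : b ≤ sSup (Set.range d)) :
    sInf {l | chainStep b d l ≤ l} = ⊤ := by
  simp only [chainStep_le_iff hsup, Set.ofPred_eq_eq_singleton, sInf_singleton]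

end ChainStep

theorem noncompact_counterexample_general {L : Type*} [CompleteLattice L]
    (b : L)
    (d : Ordinal → L) (hd : Monotone d)
    (hsup : b ≤ sSup (Set.range d)) :
    (∀ x : L, ¬ b ≤ x → {β : Ordinal | ¬ d β ≤ x}.Nonempty) ∧
    Monotone (fun x : L => if b ≤ x then ⊤ else d (sInf {β : Ordinal | ¬ d β ≤ x})) ∧
    (∀ x : L, (if b ≤ x then (⊤ : L) else d (sInf {β : Ordinal | ¬ d β ≤ x})) = x ↔
        x = ⊤) ∧
    sInf {l : L | (if b ≤ l then (⊤ : L) else d (sInf {β : Ordinal | ¬ d β ≤ l})) ≤ l}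
      = ⊤ :=
  ⟨fun _ => ChainStep.nonempty_not_le hsup, ChainStep.chainStep_monotone hd hsup,
    fun _ => ChainStep.chainStep_eq_self_iff hsup, ChainStep.sInf_setOf_chainStep_le hsup⟩

/-- From a non-compact basis element `b` of a complete lattice, witnessed by a
transfinite chain `(d_α)` with `b ⊑ ⨆_α d_α` but `b ⋢ d_α` for all `α`, the function
`f(x) = ⊤` if `b ⊑ x` and `f(x) = d_α` with `α = min {β | d_β ⋢ x}` otherwise, is
well-defined (the minimized set is nonempty when `b ⋢ x`), monotone, has `⊤` as its
only fixpoint, and its least fixpoint `⨅ {l | f l ≤ l}` is `⊤` (so `b ⊑ μf`). -/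
theorem noncompact_counterexample {L : Type*} [CompleteLattice L] (B : Set L)
    (hbasis : ∀ l : L, l = sSup {x | x ∈ B ∧ x ≤ l})
    (b : L) (hb : b ∈ B)
    (d : Ordinal → L) (hd : Monotone d)
    (hsup : b ≤ sSup (Set.range d)) (hne : ∀ α : Ordinal, ¬ b ≤ d α) :
    (∀ x : L, ¬ b ≤ x → {β : Ordinal | ¬ d β ≤ x}.Nonempty) ∧
    Monotone (fun x : L => if b ≤ x then ⊤ else d (sInf {β : Ordinal | ¬ d β ≤ x})) ∧
    (∀ x : L, (if b ≤ x then (⊤ : L) else d (sInf {β : Ordinal | ¬ d β ≤ x})) = x ↔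
        x = ⊤) ∧
    sInf {l : L | (if b ≤ l then (⊤ : L) else d (sInf {β : Ordinal | ¬ d β ≤ l})) ≤ l}
      = ⊤ :=
  noncompact_counterexample_general b d hd hsup
end

section
/- Let a₀ = 0 < a₁ < … < a_ℓ be reals in [0,1] and c ∈ (0,1]. Define decrease(v,b,l) to hold if (l = aᵢ for some i) or (a_ℓ ≤ b and b − l ≥ c(v − b)) or (aᵢ ≤ b < a_{i+1} and b − l ≥ c(a_{i+1} − b) for some i). Then decrease is well-founded: there do not exist v ∈ [0,1] and sequences (bᵐ), (lᵐ) in [0,1], m ∈ ℕ, with b^{m+1} < lᵐ ≤ bᵐ < v and decrease(v, bᵐ, lᵐ) for all m. -/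
/-- The `decrease` predicate on `[0,1]`, determined by constants
`a₀ = 0 < a₁ < … < a_ℓ` and `c`: `decrease v b l` holds if `l` equals some `aᵢ`,
or `a_ℓ ≤ b` and `b − l ≥ c(v − b)`, or `aᵢ ≤ b < a_{i+1}` and
`b − l ≥ c(a_{i+1} − b)` for some `i`. -/
def decrease (ℓ : ℕ) (a : Fin (ℓ + 1) → ℝ) (c v b l : ℝ) : Prop :=
  (∃ i : Fin (ℓ + 1), l = a i) ∨
  (a (Fin.last ℓ) ≤ b ∧ c * (v - b) ≤ b - l) ∨
  (∃ i : Fin ℓ, a i.castSucc ≤ b ∧ b < a i.succ ∧ c * (a i.succ - b) ≤ b - l)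

/-!
Along the sequence `bᵐ` every step either lands `lᵐ` on one of the finitely many thresholds
`aᵢ`, or satisfies `bᵐ − b^{m+1} > bᵐ − lᵐ ≥ c (t − bᵐ)` for a target `t ∈ {v, a₀, …, a_ℓ}`
above `bᵐ`. Since `lᵐ` is strictly decreasing, the first alternative happens only finitely
often. But `bᵐ` is decreasing and bounded below, so it converges to some `β` and its steps tend
to `0`: a target `t ≤ β` never lies above `bᵐ`, and for a target `t > β` the lower bound
`c (t − bᵐ) → c (t − β) > 0` eventually exceeds the step.
-/

open Filter Set Topology

theorem Antitone.eventually_sub_succ_lt {b : ℕ → ℝ} (hb : Antitone b) (hbdd : BddBelow (range b))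
    {c : ℝ} (hc : 0 < c) {T : Set ℝ} (hT : T.Finite) :
    ∀ᶠ m in atTop, ∀ t ∈ T, b m < t → b m - b (m + 1) < c * (t - b m) := by
  rw [hT.eventually_all]
  intro t _
  set β := ⨅ m, b m
  have hlim : Tendsto b atTop (𝓝 β) := tendsto_atTop_ciInf hb hbdd
  rcases le_or_gt t β with ht | ht
  · exact Eventually.of_forall fun m hbt => absurd (ht.trans (ciInf_le hbdd m)) hbt.not_ge
  · have hgap : Tendsto (fun m => c * (t - b m) - (b m - b (m + 1))) atTop
        (𝓝 (c * (t - β))) := by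
      simpa using ((hlim.const_sub t).const_mul c).sub
        (hlim.sub (hlim.comp (tendsto_add_atTop_nat 1)))
    filter_upwards [hgap.eventually (lt_mem_nhds (mul_pos hc (sub_pos.mpr ht)))] with m hm _
    linarith

theorem Function.Injective.eventually_notMem {α : Type*} {f : ℕ → α} (hf : f.Injective)
    {s : Set α} (hs : s.Finite) : ∀ᶠ m in atTop, f m ∉ s := by
  rw [← Nat.cofinite_eq_atTop]
  exact hf.tendsto_cofinite.eventually hs.eventually_cofinite_notMem

theorem decrease.exists_target {ℓ : ℕ} {a : Fin (ℓ + 1) → ℝ} {c v b l : ℝ}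
    (h : decrease ℓ a c v b l) (hbv : b < v) (hl : l ∉ range a) :
    ∃ t ∈ insert v (range a), b < t ∧ c * (t - b) ≤ b - l := by
  rcases h with ⟨i, rfl⟩ | ⟨-, h⟩ | ⟨i, -, hbi, h⟩
  · exact absurd ⟨i, rfl⟩ hl
  · exact ⟨v, mem_insert v _, hbv, h⟩
  · exact ⟨a i.succ, mem_insert_of_mem v ⟨i.succ, rfl⟩, hbi, h⟩

theorem decrease_wellFounded_general (ℓ : ℕ) (a : Fin (ℓ + 1) → ℝ)
    (c : ℝ) (hc0 : 0 < c) :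
    ¬ ∃ (v : ℝ) (b l : ℕ → ℝ), v ∈ Set.Icc (0:ℝ) 1 ∧
        (∀ m : ℕ, b m ∈ Set.Icc (0:ℝ) 1 ∧ l m ∈ Set.Icc (0:ℝ) 1) ∧
        (∀ m : ℕ, b (m + 1) < l m ∧ l m ≤ b m ∧ b m < v) ∧
        (∀ m : ℕ, decrease ℓ a c v (b m) (l m)) := by
  rintro ⟨v, b, l, -, hbl, hseq, hdec⟩
  have hb : Antitone b := antitone_nat_of_succ_le fun m => ((hseq m).1.trans_le (hseq m).2.1).le
  have hl : StrictAnti l :=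
    strictAnti_nat_of_succ_lt fun m => (hseq (m + 1)).2.1.trans_lt (hseq m).1
  have hbdd : BddBelow (range b) := ⟨0, forall_mem_range.mpr fun m => (hbl m).1.1⟩
  obtain ⟨m, hsmall, hlm⟩ := ((hb.eventually_sub_succ_lt hbdd hc0
    ((finite_range a).insert v)).and (hl.injective.eventually_notMem (finite_range a))).exists
  obtain ⟨t, ht, hbt, hstep⟩ := (hdec m).exists_target (hseq m).2.2 hlm
  have := hsmall t ht hbt
  linarith [(hseq m).1]

/-- Well-foundedness of the `decrease` predicate: for real constants
`a₀ = 0 < a₁ < … < a_ℓ` in `[0,1]` and `c ∈ (0,1]`, there do not exist `v ∈ [0,1]`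
and sequences `(bᵐ)`, `(lᵐ)` in `[0,1]` with `b^{m+1} < lᵐ ≤ bᵐ < v` and
`decrease v bᵐ lᵐ` for all `m`. -/
theorem decrease_wellFounded (ℓ : ℕ) (a : Fin (ℓ + 1) → ℝ)
    (ha0 : a 0 = 0) (hmono : StrictMono a) (haI : ∀ i, a i ∈ Set.Icc (0:ℝ) 1)
    (c : ℝ) (hc0 : 0 < c) (hc1 : c ≤ 1) :
    ¬ ∃ (v : ℝ) (b l : ℕ → ℝ), v ∈ Set.Icc (0:ℝ) 1 ∧
        (∀ m : ℕ, b m ∈ Set.Icc (0:ℝ) 1 ∧ l m ∈ Set.Icc (0:ℝ) 1) ∧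
        (∀ m : ℕ, b (m + 1) < l m ∧ l m ≤ b m ∧ b m < v) ∧
        (∀ m : ℕ, decrease ℓ a c v (b m) (l m)) :=
  decrease_wellFounded_general ℓ a c hc0
end
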